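/- Let n ≥ 2, let B = {q ∈ ℝ^{n−1} : (q,q) < 1} be the open unit ball, J a symmetric positive definite (n−1)×(n−1) real matrix, A = J⁻¹, and V : B → ℝ continuously differentiable. Suppose q, P : (a,b) → ℝ^{n−1} are differentiable, q(t) ∈ B for all t, and they satisfy the reduced Suslov equations q̇ = (1 − (q,q))·AP and Ṗ = −∇V(q) + (AP,q)·P. Let σ : (a,b) → ℝ be a primitive of t ↦ √(1 − (q(t),q(t))) (so σ is strictly increasing), with inverse s. Then the reparametrized curve Q(τ) := q(s(τ)) together with p(τ) := √(1 − (q(s(τ)),q(s(τ))))·P(s(τ)) satisfies Hamilton's equations dQ/dτ = Ap, dp/dτ = −∇V(Q) for the Hamiltonian H*(Q,p) = ½(Ap,p) + V(Q); equivalently Q is twice differentiable and J·Q″ = −∇V(Q). -/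

import Mathlib

open Matrix Set

/-- The continuous linear functional `v ↦ w ⬝ᵥ v` on `ℝᵐ`. -/
noncomputable def dotCLM {m : ℕ} (w : Fin m → ℝ) : (Fin m → ℝ) →L[ℝ] ℝ :=
  LinearMap.toContinuousLinearMap
    { toFun := fun v => w ⬝ᵥ v
      map_add' := fun a b => dotProduct_add w a b
      map_smul' := fun c a => by simp [dotProduct_smul, smul_eq_mul] }

/-- Product rule for the dot product of two differentiable curves. -/
lemma hasDerivAt_dotProduct {m : ℕ} {f g : ℝ → Fin m → ℝ} {f' g' : Fin m → ℝ} {x : ℝ}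
    (hf : HasDerivAt f f' x) (hg : HasDerivAt g g' x) :
    HasDerivAt (fun t => f t ⬝ᵥ g t) (f' ⬝ᵥ g x + f x ⬝ᵥ g') x := by
  have hfi := hasDerivAt_pi.1 hf
  have hgi := hasDerivAt_pi.1 hg
  have h : HasDerivAt (fun t => ∑ i, f t i * g t i)
      (∑ i, (f' i * g x i + f x i * g' i)) x :=
    HasDerivAt.fun_sum fun i _ => (hfi i).mul (hgi i)
  simpa [dotProduct, Finset.sum_add_distrib] using h

/-- Hamiltonization part of Theorem 2 (Chaplygin reducing multiplier `𝒩 = q_n`):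
if `(q, P)` solves the Chaplygin-reduced Suslov system
`q̇ = (1−(q,q))·AP`, `Ṗ = (AP,P)q − ∇V(q) + (AP,q)P − (P,AP)q` inside the open unit ball
`B ⊂ ℝ^{n−1}`, and `σ` is a primitive of `√(1−(q,q))` with inverse `s`, then the curves
`Q(τ) = q(s(τ))` and `p(τ) = √(1−(q(s(τ)),q(s(τ))))·P(s(τ))` satisfy Hamilton's equations
`dQ/dτ = Ap`, `dp/dτ = −∇V(Q)` for the Hamiltonian `H* = ½(Ap,p) + V(Q)`. -/
theorem suslov_hamiltonization (n : ℕ) (hn : 2 ≤ n)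
    (J A : Matrix (Fin (n - 1)) (Fin (n - 1)) ℝ) (hJ : J.IsSymm) (hJpd : J.PosDef)
    (hA : A = J⁻¹)
    (V : (Fin (n - 1) → ℝ) → ℝ) (gradV : (Fin (n - 1) → ℝ) → (Fin (n - 1) → ℝ))
    (hV : ∀ x, x ⬝ᵥ x < 1 → HasFDerivAt V (dotCLM (gradV x)) x)
    (hVc : ContinuousOn gradV {x | x ⬝ᵥ x < 1})
    (a b : ℝ) (q P : ℝ → Fin (n - 1) → ℝ)
    (hball : ∀ t ∈ Ioo a b, q t ⬝ᵥ q t < 1)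
    (hq : ∀ t ∈ Ioo a b, HasDerivAt q ((1 - q t ⬝ᵥ q t) • A.mulVec (P t)) t)
    (hP : ∀ t ∈ Ioo a b, HasDerivAt P
      ((A.mulVec (P t) ⬝ᵥ P t) • q t - gradV (q t)
        + (A.mulVec (P t) ⬝ᵥ q t) • P t - (P t ⬝ᵥ A.mulVec (P t)) • q t) t)
    (σ s : ℝ → ℝ)
    (hσ : ∀ t ∈ Ioo a b, HasDerivAt σ (Real.sqrt (1 - q t ⬝ᵥ q t)) t)
    (hs : ∀ t ∈ Ioo a b, s (σ t) = t) :
    ∀ τ ∈ σ '' Ioo a b,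
      HasDerivAt (fun τ' => q (s τ'))
        (A.mulVec (Real.sqrt (1 - q (s τ) ⬝ᵥ q (s τ)) • P (s τ))) τ ∧
      HasDerivAt (fun τ' => Real.sqrt (1 - q (s τ') ⬝ᵥ q (s τ')) • P (s τ'))
        (-gradV (q (s τ))) τ := by
  rintro τ ⟨t₀, ht₀, rfl⟩
  have hpos : ∀ t ∈ Ioo a b, 0 < 1 - q t ⬝ᵥ q t := fun t ht => by linarith [hball t ht]
  have hcpos : ∀ t ∈ Ioo a b, 0 < Real.sqrt (1 - q t ⬝ᵥ q t) :=
    fun t ht => Real.sqrt_pos.2 (hpos t ht)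
  have hσc : ContinuousOn σ (Ioo a b) :=
    fun t ht => (hσ t ht).continuousAt.continuousWithinAt
  have hmono : StrictMonoOn σ (Ioo a b) := by
    apply strictMonoOn_of_deriv_pos (convex_Ioo a b) hσc
    intro t ht
    rw [interior_Ioo] at ht
    rw [(hσ t ht).deriv]
    exact hcpos t ht
  -- intermediate value: images of subintervals
  have himg : ∀ u ∈ Ioo a b, ∀ v ∈ Ioo a b, u ≤ v → Ioo (σ u) (σ v) ⊆ σ '' Ioo u v := by
    intro u hu v hv huv
    exact intermediate_value_Ioo huv (hσc.mono (Icc_subset_Ioo hu.1 hv.2))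
  have hst : s (σ t₀) = t₀ := hs t₀ ht₀
  -- continuity of s at σ t₀
  have hcont : ContinuousAt s (σ t₀) := by
    rw [ContinuousAt, hst, Metric.tendsto_nhds]
    intro ε hε
    obtain ⟨t₁, ht₁⟩ := exists_between (max_lt ht₀.1 (by linarith : t₀ - ε < t₀))
    obtain ⟨t₂, ht₂⟩ := exists_between (lt_min ht₀.2 (by linarith : t₀ < t₀ + ε))
    have ht₁I : t₁ ∈ Ioo a b := ⟨lt_of_le_of_lt (le_max_left _ _) ht₁.1, ht₁.2.trans ht₀.2⟩
    have ht₂I : t₂ ∈ Ioo a b := ⟨ht₀.1.trans ht₂.1, lt_of_lt_of_le ht₂.2 (min_le_left _ _)⟩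
    have hτmem : σ t₀ ∈ Ioo (σ t₁) (σ t₂) :=
      ⟨hmono ht₁I ht₀ ht₁.2, hmono ht₀ ht₂I ht₂.1⟩
    have hnhds : Ioo (σ t₁) (σ t₂) ∈ nhds (σ t₀) := Ioo_mem_nhds hτmem.1 hτmem.2
    filter_upwards [hnhds] with y hy
    obtain ⟨u, hu, rfl⟩ := himg t₁ ht₁I t₂ ht₂I (ht₁.2.trans ht₂.1).le hy
    have huI : u ∈ Ioo a b := ⟨ht₁I.1.trans hu.1, hu.2.trans ht₂I.2⟩
    rw [hs u huI, Real.dist_eq, abs_sub_lt_iff]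
    have h1 : t₀ - ε < t₁ := lt_of_le_of_lt (le_max_right _ _) ht₁.1
    have h2 : t₂ < t₀ + ε := lt_of_lt_of_le ht₂.2 (min_le_right _ _)
    exact ⟨by linarith [hu.2], by linarith [hu.1]⟩
  -- local right inverse
  have hev : ∀ᶠ y in nhds (σ t₀), σ (s y) = y := by
    obtain ⟨t₁, ht₁⟩ := exists_between ht₀.1
    obtain ⟨t₂, ht₂⟩ := exists_between ht₀.2
    have ht₁I : t₁ ∈ Ioo a b := ⟨ht₁.1, ht₁.2.trans ht₀.2⟩
    have ht₂I : t₂ ∈ Ioo a b := ⟨ht₀.1.trans ht₂.1, ht₂.2⟩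
    have hnhds : Ioo (σ t₁) (σ t₂) ∈ nhds (σ t₀) :=
      Ioo_mem_nhds (hmono ht₁I ht₀ ht₁.2) (hmono ht₀ ht₂I ht₂.1)
    filter_upwards [hnhds] with y hy
    obtain ⟨u, hu, rfl⟩ := himg t₁ ht₁I t₂ ht₂I (ht₁.2.trans ht₂.1).le hy
    rw [hs u ⟨ht₁I.1.trans hu.1, hu.2.trans ht₂I.2⟩]
  set c : ℝ := Real.sqrt (1 - q t₀ ⬝ᵥ q t₀) with hc
  have hc0 : 0 < c := hcpos t₀ ht₀
  have hcne : c ≠ 0 := ne_of_gt hc0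
  have hc2 : c * c = 1 - q t₀ ⬝ᵥ q t₀ := Real.mul_self_sqrt (hpos t₀ ht₀).le
  -- derivative of s
  have hσ0 : HasDerivAt σ c (s (σ t₀)) := by rw [hst]; exact hσ t₀ ht₀
  have hsd : HasDerivAt s c⁻¹ (σ t₀) :=
    HasDerivAt.of_local_left_inverse hcont hσ0 hcne hev
  -- derivative of q ∘ s
  have hq0 : HasDerivAt q ((1 - q t₀ ⬝ᵥ q t₀) • A.mulVec (P t₀)) (s (σ t₀)) := by
    rw [hst]; exact hq t₀ ht₀
  have hQ : HasDerivAt (fun τ' => q (s τ'))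
      (c⁻¹ • ((1 - q t₀ ⬝ᵥ q t₀) • A.mulVec (P t₀))) (σ t₀) := HasDerivAt.scomp (σ t₀) hq0 hsd
  have hQval : c⁻¹ • ((1 - q t₀ ⬝ᵥ q t₀) • A.mulVec (P t₀)) = c • A.mulVec (P t₀) := by
    rw [smul_smul, ← hc2]
    congr 1
    field_simp
  rw [hQval] at hQ
  constructor
  · rw [hst]
    have : A.mulVec (c • P t₀) = c • A.mulVec (P t₀) := A.mulVec_smul c (P t₀)
    rw [this]
    exact hQ
  -- second part
  rw [hst]
  -- derivative of the inner function 1 - (q∘s, q∘s)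
  have hdot : HasDerivAt (fun τ' => q (s τ') ⬝ᵥ q (s τ'))
      ((c • A.mulVec (P t₀)) ⬝ᵥ q t₀ + q t₀ ⬝ᵥ (c • A.mulVec (P t₀))) (σ t₀) := by
    have := hasDerivAt_dotProduct hQ hQ
    rw [hst] at this
    exact this
  have hw : HasDerivAt (fun τ' => 1 - q (s τ') ⬝ᵥ q (s τ'))
      (-((c • A.mulVec (P t₀)) ⬝ᵥ q t₀ + q t₀ ⬝ᵥ (c • A.mulVec (P t₀)))) (σ t₀) :=
    (hasDerivAt_const _ (1 : ℝ)).sub hdot |>.congr_deriv (by ring)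
  have hwx : (1 : ℝ) - q (s (σ t₀)) ⬝ᵥ q (s (σ t₀)) ≠ 0 := by
    rw [hst]; exact ne_of_gt (hpos t₀ ht₀)
  have hsqrt := hw.sqrt (by rw [hst]; exact ne_of_gt (hpos t₀ ht₀))
  rw [hst] at hsqrt
  -- simplify the derivative of the sqrt factor
  have hsval : -((c • A.mulVec (P t₀)) ⬝ᵥ q t₀ + q t₀ ⬝ᵥ (c • A.mulVec (P t₀))) / (2 * c)
      = -(A.mulVec (P t₀) ⬝ᵥ q t₀) := by
    rw [smul_dotProduct, dotProduct_smul, smul_eq_mul, smul_eq_mul,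
      dotProduct_comm (q t₀)]
    field_simp
    ring
  rw [hsval] at hsqrt
  -- derivative of P ∘ s
  have hP0 : HasDerivAt P ((A.mulVec (P t₀) ⬝ᵥ P t₀) • q t₀ - gradV (q t₀)
      + (A.mulVec (P t₀) ⬝ᵥ q t₀) • P t₀ - (P t₀ ⬝ᵥ A.mulVec (P t₀)) • q t₀) (s (σ t₀)) := by
    rw [hst]; exact hP t₀ ht₀
  have hPs : HasDerivAt (fun τ' => P (s τ'))
      (c⁻¹ • ((A.mulVec (P t₀) ⬝ᵥ P t₀) • q t₀ - gradV (q t₀)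
        + (A.mulVec (P t₀) ⬝ᵥ q t₀) • P t₀ - (P t₀ ⬝ᵥ A.mulVec (P t₀)) • q t₀)) (σ t₀) :=
    HasDerivAt.scomp (σ t₀) hP0 hsd
  -- product rule for p = √(1-(q,q)) • P
  have hsmul := hsqrt.smul hPs
  rw [hst] at hsmul
  refine hsmul.congr_deriv ?_
  rw [smul_smul, mul_inv_cancel₀ hcne, one_smul,
    dotProduct_comm (A.mulVec (P t₀)) (P t₀)]
  module
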